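/- arXiv:1908.01639 — 4 statements merged into one kernel-verified Lean document; each statement's English description precedes it below -/
import Mathlib

section
/- Let β : [0,1] → ℝ be a monotone increasing function with β(0) > 2. Then there exists a real number N ≥ 2 and a subinterval I ⊆ [0,1] of length at least c/(log N)² (for some universal constant c > 0) such that N ≤ β(r) ≤ 2N for all r ∈ I. -/
private lemma sum_inv_sq_lt_two (m : ℕ) :
    ∑ k ∈ Finset.range m, (1:ℝ)/((k:ℝ)+1)^2 < 2 := by
  have key : ∀ m : ℕ, 1 ≤ m → ∑ k ∈ Finset.range m, (1:ℝ)/((k:ℝ)+1)^2 ≤ 2 - 1/(m:ℝ) := by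
    intro m hm
    induction m with
    | zero => omega
    | succ n ih =>
      rcases Nat.eq_or_lt_of_le hm with h | h
      · simp [← h]
        norm_num
      · have hn : 1 ≤ n := by omega
        have ihn := ih hn
        rw [Finset.sum_range_succ]
        have hnpos : (0:ℝ) < n := by exact_mod_cast hn
        have h1 : (1:ℝ)/((n:ℝ)+1)^2 ≤ 1/(n:ℝ) - 1/((n:ℝ)+1) := by
          rw [div_sub_div _ _ (ne_of_gt hnpos) (by positivity)]
          rw [div_le_div_iff₀ (by positivity) (by positivity)]
          ring_nf
          nlinarith
        push_cast
        linarith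
  rcases Nat.eq_zero_or_pos m with h | h
  · simp [h]
  · have := key m h
    have : (0:ℝ) < 1/(m:ℝ) := by positivity
    linarith [key m h]

/-- A monotone function with β(0) > 2 has an interval of length c/(log N)² where
    N ≤ β ≤ 2N. -/
theorem monotone_stable_interval :
    ∃ c > 0, ∀ β : ℝ → ℝ, MonotoneOn β (Set.Icc 0 1) → 2 < β 0 →
      ∃ N : ℝ, 2 ≤ N ∧ ∃ a b : ℝ, 0 ≤ a ∧ b ≤ 1 ∧
        c / (Real.log N)^2 ≤ b - a ∧
        ∀ r ∈ Set.Icc a b, N ≤ β r ∧ β r ≤ 2 * N := by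
  refine ⟨(Real.log 2)^2 / 4, by positivity, ?_⟩
  intro β hmono hβ0
  -- the level sets
  set S : ℕ → Set ℝ := fun k => {r ∈ Set.Icc (0:ℝ) 1 | β r ≤ 2^k} with hS
  set s : ℕ → ℝ := fun k => sSup (S k) with hs
  have hbdd : ∀ k, BddAbove (S k) := fun k =>
    ⟨1, fun r hr => hr.1.2⟩
  have hs_nonneg : ∀ k, 0 ≤ s k := fun k =>
    Real.sSup_nonneg (fun r hr => hr.1.1)
  have hs_le_one : ∀ k, s k ≤ 1 :=
    fun k => Real.sSup_le (fun r hr => hr.1.2) zero_le_one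
  have upper : ∀ k r, r ∈ Set.Icc (0:ℝ) 1 → β r ≤ 2^k → r ≤ s k := by
    intro k r hr hβr
    exact le_csSup (hbdd k) ⟨hr, hβr⟩
  have lower : ∀ k r, 0 ≤ r → r < s k → β r ≤ 2^k := by
    intro k r hr0 hrs
    have hne : (S k).Nonempty := by
      by_contra hne
      rw [Set.not_nonempty_iff_eq_empty] at hne
      rw [hs] at hrs
      simp only [hne, Real.sSup_empty] at hrs
      linarith
    obtain ⟨r', hr', hrr'⟩ := exists_lt_of_lt_csSup hne hrs
    have hr1 : r ≤ 1 := le_trans (le_of_lt hrs) (hs_le_one k)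
    calc β r ≤ β r' := hmono ⟨hr0, hr1⟩ hr'.1 (le_of_lt hrr')
    _ ≤ 2^k := hr'.2
  have hs1 : s 1 = 0 := by
    have : S 1 = ∅ := by
      ext r
      simp only [Set.mem_setOf_eq, Set.mem_empty_iff_false, iff_false]
      rintro ⟨hr, hβr⟩
      have : β 0 ≤ β r := hmono ⟨le_refl 0, zero_le_one⟩ hr (hr.1)
      norm_num at hβr
      linarith
    rw [hs]; simp only [this, Real.sSup_empty]
  -- choose m with β 1 ≤ 2^(m+1) and m ≥ 1
  obtain ⟨n, hn⟩ := pow_unbounded_of_one_lt (β 1) (one_lt_two (α := ℝ))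
  set m : ℕ := max n 1 with hm
  have hm1 : 1 ≤ m := le_max_right n 1
  have hβ1 : β 1 ≤ 2^(m+1) := by
    have h1 : (2:ℝ)^n ≤ 2^(m+1) :=
      pow_le_pow_right₀ one_le_two (le_trans (le_max_left n 1) (Nat.le_succ m))
    linarith
  have hsm : s (m+1) = 1 := by
    have h1 : (1:ℝ) ∈ S (m+1) := ⟨⟨zero_le_one, le_refl 1⟩, hβ1⟩
    exact le_antisymm (hs_le_one _) (le_csSup (hbdd _) h1)
  -- telescoping
  have htel : ∑ k ∈ Finset.range m, (s (k+2) - s (k+1)) = 1 := by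
    rw [Finset.sum_range_sub (fun k => s (k+1))]
    simp [hs1, hsm, show m + 1 = m + 1 from rfl]
  -- pigeonhole
  have hpig : ∃ k < m, 1/(2*((k:ℝ)+1)^2) ≤ s (k+2) - s (k+1) := by
    by_contra hcon
    push_neg at hcon
    have hlt : ∑ k ∈ Finset.range m, (s (k+2) - s (k+1)) <
        ∑ k ∈ Finset.range m, 1/(2*((k:ℝ)+1)^2) := by
      apply Finset.sum_lt_sum_of_nonempty
      · exact Finset.nonempty_range_iff.mpr (by omega)
      · intro k hk
        exact hcon k (Finset.mem_range.mp hk)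
    have hsum : ∑ k ∈ Finset.range m, 1/(2*((k:ℝ)+1)^2)
        = (1/2) * ∑ k ∈ Finset.range m, (1:ℝ)/((k:ℝ)+1)^2 := by
      rw [Finset.mul_sum]
      apply Finset.sum_congr rfl
      intro k _
      have : ((k:ℝ)+1)^2 > 0 := by positivity
      field_simp
    have := sum_inv_sq_lt_two m
    rw [htel, hsum] at hlt
    linarith
  obtain ⟨k, hkm, hk⟩ := hpig
  set K : ℕ := k + 1 with hK
  set L : ℝ := s (K+1) - s K with hL
  have hKpos : (0:ℝ) < (K:ℝ) := by positivity
  have hLge : 1/(2*((K:ℝ))^2) ≤ L := by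
    have : ((k:ℝ)+1) = (K:ℝ) := by push_cast [hK]; ring
    rw [← this]; exact hk
  have hLpos : 0 < L := lt_of_lt_of_le (by positivity) hLge
  have ha0 : 0 ≤ s K + L/4 := by linarith [hs_nonneg K]
  have hb1 : s (K+1) - L/4 ≤ 1 := by linarith [hs_le_one (K+1)]
  refine ⟨2^K, ?_, s K + L/4, s (K+1) - L/4, ha0, hb1, ?_, ?_⟩
  · calc (2:ℝ) = 2^1 := (pow_one 2).symm
    _ ≤ 2^K := pow_le_pow_right₀ one_le_two (by omega)
  · have hlog : Real.log ((2:ℝ)^K) = (K:ℝ) * Real.log 2 := by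
      rw [Real.log_pow]
    have hl2 : (0:ℝ) < Real.log 2 := Real.log_pos one_lt_two
    have heq : (Real.log 2)^2 / 4 / (Real.log ((2:ℝ)^K))^2 = 1/(4*(K:ℝ)^2) := by
      rw [hlog]; field_simp
    rw [heq]
    have : (1:ℝ)/(4*(K:ℝ)^2) ≤ L/2 := by
      have h2 : (1:ℝ)/(2*(K:ℝ)^2) ≤ L := hLge
      have : (1:ℝ)/(4*(K:ℝ)^2) = (1/(2*(K:ℝ)^2))/2 := by field_simp; ring
      rw [this]; linarith
    linarith
  · intro r hr
    have hra : s K + L/4 ≤ r := hr.1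
    have hrb : r ≤ s (K+1) - L/4 := hr.2
    have hr0 : 0 ≤ r := le_trans ha0 hra
    have hr1 : r ≤ 1 := le_trans hrb hb1
    constructor
    · by_contra hcon
      push_neg at hcon
      have := upper K r ⟨hr0, hr1⟩ (le_of_lt hcon)
      linarith
    · have hrs : r < s (K+1) := by linarith
      have := lower (K+1) r hr0 hrs
      calc β r ≤ 2^(K+1) := this
      _ = 2 * 2^K := by rw [pow_succ]; ring
end

section
/- Let D ⊆ ℂ be open, h : D → ℝ smooth with Δh ≥ 1 on D. Then there is a universal constant c > 0 such that for all t ≥ 1 and all f ∈ C_c^∞(D; ℂ): ∫_D |Δf|² e^{th} ≥ c t² ∫_D |f|² e^{th}. -/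
/-- The planar Laplacian ∂²/∂x² + ∂²/∂y² of a function on ℂ ≅ ℝ². -/
noncomputable def planarLap {E : Type*} [NormedAddCommGroup E] [NormedSpace ℝ E]
    (h : ℂ → E) (z : ℂ) : E :=
  fderiv ℝ (fun w => fderiv ℝ h w 1) z 1 +
    fderiv ℝ (fun w => fderiv ℝ h w Complex.I) z Complex.I

open MeasureTheory Complex Filter Function Set
open scoped ContDiff


lemma one_le_inf : (∞ : WithTop ℕ∞) ≠ 0 := by simp
lemma two_le_inf : (2 : WithTop ℕ∞) ≤ ∞ := by
  have : ((2:ℕ∞) : WithTop ℕ∞) ≤ ∞ := by exact_mod_cast (le_top : (2:ℕ∞) ≤ ⊤)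
  simpa using this

variable {E : Type*} [NormedAddCommGroup E] [NormedSpace ℝ E]

noncomputable def dv (f : ℂ → E) (v : ℂ) : ℂ → E := fun z => fderiv ℝ f z v

lemma contDiff_fderiv_inf {f : ℂ → E} (hf : ContDiff ℝ ∞ f) : ContDiff ℝ ∞ (fderiv ℝ f) :=
  (contDiff_infty_iff_fderiv.mp hf).2

lemma contDiff_dv {f : ℂ → E} (hf : ContDiff ℝ ∞ f) (v : ℂ) : ContDiff ℝ ∞ (dv f v) :=
  (ContinuousLinearMap.apply ℝ E v).contDiff.comp (contDiff_fderiv_inf hf)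

lemma support_dv (f : ℂ → E) (v : ℂ) : support (dv f v) ⊆ tsupport f := by
  intro z hz
  have : fderiv ℝ f z ≠ 0 := by
    intro h; apply hz; simp [dv, h]
  exact support_fderiv_subset ℝ (f := f) this

lemma hasCompactSupport_dv {f : ℂ → E} (hf : HasCompactSupport f) (v : ℂ) :
    HasCompactSupport (dv f v) :=
  IsCompact.of_isClosed_subset hf (isClosed_tsupport _)
    (closure_minimal (support_dv f v) (isClosed_tsupport f))

lemma dv_clairaut {f : ℂ → E} (hf : ContDiff ℝ ∞ f) (z v w : ℂ) :
    dv (dv f w) v z = dv (dv f v) w z := by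
  have hsym : ∀ a b, fderiv ℝ (fderiv ℝ f) z a b = fderiv ℝ (fderiv ℝ f) z b a :=
    (hf.contDiffAt.isSymmSndFDerivAt (by rw [minSmoothness_of_isRCLikeNormedField]; exact two_le_inf)).eq
  have hd : DifferentiableAt ℝ (fderiv ℝ f) z :=
    ((contDiff_fderiv_inf hf).differentiable one_le_inf) z
  have key : ∀ u c : ℂ, dv (dv f c) u z = fderiv ℝ (fderiv ℝ f) z u c := by
    intro u c
    have := fderiv_clm_apply (𝕜 := ℝ) (c := fderiv ℝ f) (u := fun _ => c) hd
      (differentiableAt_const c)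
    show (fderiv ℝ (fun y => (fderiv ℝ f y) ((fun _ => c) y)) z) u = _
    rw [this]
    simp
  rw [key, key, hsym]

lemma dv_mul {f g : ℂ → ℂ} (hf : ContDiff ℝ ∞ f) (hg : ContDiff ℝ ∞ g) (v z : ℂ) :
    dv (fun w => f w * g w) v z = dv f v z * g z + f z * dv g v z := by
  simp only [dv]
  rw [fderiv_fun_mul (hf.differentiable one_le_inf z) (hg.differentiable one_le_inf z)]
  simp [smul_eq_mul]; ring

lemma dv_conj {f : ℂ → ℂ} (hf : ContDiff ℝ ∞ f) (v z : ℂ) :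
    dv (fun w => (starRingEnd ℂ) (f w)) v z = (starRingEnd ℂ) (dv f v z) := by
  simp only [dv]
  have : fderiv ℝ (fun w => (starRingEnd ℂ) (f w)) z
      = (Complex.conjCLE.toContinuousLinearMap).comp (fderiv ℝ f z) := by
    exact (Complex.conjCLE.toContinuousLinearMap.hasFDerivAt.comp z
      (hf.differentiable one_le_inf z).hasFDerivAt).fderiv
  rw [this]; rfl

lemma dv_ofReal {ψ : ℂ → ℝ} (hψ : ContDiff ℝ ∞ ψ) (v z : ℂ) :
    dv (fun w => ((ψ w : ℝ) : ℂ)) v z = ((fderiv ℝ ψ z v : ℝ) : ℂ) := by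
  simp only [dv]
  have : fderiv ℝ (fun w => ((ψ w : ℝ) : ℂ)) z
      = Complex.ofRealCLM.comp (fderiv ℝ ψ z) :=
    (Complex.ofRealCLM.hasFDerivAt.comp z (hψ.differentiable one_le_inf z).hasFDerivAt).fderiv
  rw [this]; rfl

lemma dv_exp {ψ : ℂ → ℝ} (hψ : ContDiff ℝ ∞ ψ) (v z : ℂ) :
    dv (fun w => ((Real.exp (ψ w) : ℝ) : ℂ)) v z
      = ((fderiv ℝ ψ z v : ℝ) : ℂ) * ((Real.exp (ψ z) : ℝ) : ℂ) := by
  have h1 : ContDiff ℝ ∞ (fun w => Real.exp (ψ w)) := Real.contDiff_exp.comp hψ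
  rw [dv_ofReal h1 v z]
  have : fderiv ℝ (fun w => Real.exp (ψ w)) z = Real.exp (ψ z) • fderiv ℝ ψ z :=
    fderiv_exp (hψ.differentiable one_le_inf z)
  rw [this]
  simp only [ContinuousLinearMap.smul_apply, smul_eq_mul, Complex.ofReal_mul]
  ring

lemma dv_add {f g : ℂ → ℂ} (hf : ContDiff ℝ ∞ f) (hg : ContDiff ℝ ∞ g) (v z : ℂ) :
    dv (fun w => f w + g w) v z = dv f v z + dv g v z := by
  simp only [dv]
  rw [fderiv_fun_add (hf.differentiable one_le_inf z) (hg.differentiable one_le_inf z)]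
  rfl

lemma integral_fderiv_real (F : ℂ → ℝ) (hF : ContDiff ℝ ∞ F) (hFc : HasCompactSupport F)
    (v : ℂ) : ∫ z, fderiv ℝ F z v = 0 := by
  obtain ⟨C, hC⟩ := hF.lipschitzWith_of_hasCompactSupport hFc one_le_inf
  obtain ⟨R, hR0, hR⟩ : ∃ R : ℝ, 0 < R ∧ tsupport F ⊆ Metric.ball 0 R := by
    obtain ⟨R, hR⟩ := hFc.isCompact.isBounded.subset_ball 0
    exact ⟨|R| + 1, by positivity,
      hR.trans (Metric.ball_subset_ball (by cases abs_cases R <;> linarith))⟩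
  set b : ContDiffBump (0 : ℂ) := ⟨R, R + 1, hR0, by linarith⟩
  have hb_smooth : ContDiff ℝ ∞ (b : ℂ → ℝ) := b.contDiff
  have hb_supp : HasCompactSupport (b : ℂ → ℝ) := b.hasCompactSupport
  obtain ⟨Cb, hCb⟩ := hb_smooth.lipschitzWith_of_hasCompactSupport hb_supp one_le_inf
  have key := hC.integral_lineDeriv_mul_eq (μ := volume) hCb hb_supp v
  have hFd : Differentiable ℝ F := hF.differentiable one_le_inf
  have lhs_eq : ∀ z, lineDeriv ℝ F z v * b z = fderiv ℝ F z v := by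
    intro z
    rw [(hFd z).lineDeriv_eq_fderiv]
    by_cases hz : z ∈ tsupport F
    · rw [b.one_of_mem_closedBall (Metric.ball_subset_closedBall (hR hz))]
      ring
    · have : fderiv ℝ F z = 0 := by
        by_contra h
        exact hz (support_fderiv_subset ℝ h)
      simp [this]
  have rhs_eq : ∀ z, lineDeriv ℝ (b : ℂ → ℝ) z (-v) * F z = 0 := by
    intro z
    by_cases hz : z ∈ tsupport F
    · have hmem : Metric.ball (0:ℂ) R ∈ nhds z := (Metric.isOpen_ball.mem_nhds (hR hz))
      have : lineDeriv ℝ (b : ℂ → ℝ) z (-v) = 0 := by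
        rw [((hb_smooth.differentiable one_le_inf) z).lineDeriv_eq_fderiv]
        have heq : (b : ℂ → ℝ) =ᶠ[nhds z] (fun _ => 1) := by
          filter_upwards [hmem] with w hw
          exact b.one_of_mem_closedBall (Metric.ball_subset_closedBall hw)
        rw [heq.fderiv_eq, fderiv_fun_const]
        simp
      simp [this]
    · have : F z = 0 := image_eq_zero_of_notMem_tsupport hz
      simp [this]
  calc ∫ z, fderiv ℝ F z v = ∫ z, lineDeriv ℝ F z v * b z := by
        congr 1; ext z; rw [lhs_eq]
    _ = ∫ z, lineDeriv ℝ (b : ℂ → ℝ) z (-v) * F z := key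
    _ = 0 := by simp [rhs_eq]

lemma integral_dv (F : ℂ → ℂ) (hF : ContDiff ℝ ∞ F) (hFc : HasCompactSupport F)
    (v : ℂ) : ∫ z, dv F v z = 0 := by
  have hFd : Differentiable ℝ F := hF.differentiable one_le_inf
  have hre : ContDiff ℝ ∞ (fun z => (F z).re) := Complex.reCLM.contDiff.comp hF
  have him : ContDiff ℝ ∞ (fun z => (F z).im) := Complex.imCLM.contDiff.comp hF
  have hrec : HasCompactSupport (fun z => (F z).re) := by
    apply hFc.mono; intro z hz h; apply hz; simp [h]
  have himc : HasCompactSupport (fun z => (F z).im) := by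
    apply hFc.mono; intro z hz h; apply hz; simp [h]
  have freF : ∀ z, fderiv ℝ (fun w => (F w).re) z v = (fderiv ℝ F z v).re := by
    intro z
    have : fderiv ℝ (fun w => (F w).re) z = Complex.reCLM.comp (fderiv ℝ F z) :=
      (Complex.reCLM.hasFDerivAt.comp z (hFd z).hasFDerivAt).fderiv
    rw [this]; rfl
  have fimF : ∀ z, fderiv ℝ (fun w => (F w).im) z v = (fderiv ℝ F z v).im := by
    intro z
    have : fderiv ℝ (fun w => (F w).im) z = Complex.imCLM.comp (fderiv ℝ F z) :=
      (Complex.imCLM.hasFDerivAt.comp z (hFd z).hasFDerivAt).fderiv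
    rw [this]; rfl
  have hsplit : ∀ z, dv F v z
      = ((fderiv ℝ (fun w => (F w).re) z v : ℝ) : ℂ)
        + (fderiv ℝ (fun w => (F w).im) z v) • (Complex.I) := by
    intro z
    rw [freF, fimF, Complex.real_smul]
    exact (Complex.re_add_im _).symm
  have hire : Integrable (fun z => fderiv ℝ (fun w => (F w).re) z v) := by
    apply Continuous.integrable_of_hasCompactSupport
    · exact (contDiff_dv hre v).continuous
    · exact hasCompactSupport_dv hrec v
  have hiim : Integrable (fun z => fderiv ℝ (fun w => (F w).im) z v) := by
    apply Continuous.integrable_of_hasCompactSupport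
    · exact (contDiff_dv him v).continuous
    · exact hasCompactSupport_dv himc v
  calc ∫ z, dv F v z
      = ∫ z, (((fderiv ℝ (fun w => (F w).re) z v : ℝ) : ℂ)
          + (fderiv ℝ (fun w => (F w).im) z v) • (Complex.I)) := by
        congr 1; ext z; rw [hsplit]
    _ = (∫ z, ((fderiv ℝ (fun w => (F w).re) z v : ℝ) : ℂ))
          + ∫ z, (fderiv ℝ (fun w => (F w).im) z v) • (Complex.I) := by
        apply integral_add
        · exact hire.ofReal
        · exact (hiim.smul_const Complex.I)
    _ = ((∫ z, fderiv ℝ (fun w => (F w).re) z v : ℝ) : ℂ)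
          + (∫ z, fderiv ℝ (fun w => (F w).im) z v) • (Complex.I) := by
        rw [integral_smul_const]
        congr 1
        exact ContinuousLinearMap.integral_comp_comm Complex.ofRealCLM hire
    _ = 0 := by
        rw [integral_fderiv_real _ hre hrec, integral_fderiv_real _ him himc]
        simp
noncomputable section
/-- ∂̄ operator -/
def db (f : ℂ → ℂ) : ℂ → ℂ := fun z => (dv f 1 z + Complex.I * dv f Complex.I z) / 2
/-- ∂ operator -/
def dzz (f : ℂ → ℂ) : ℂ → ℂ := fun z => (dv f 1 z - Complex.I * dv f Complex.I z) / 2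
/-- weight -/
def Ef (ψ : ℂ → ℝ) : ℂ → ℂ := fun z => ((Real.exp (ψ z) : ℝ) : ℂ)
/-- ψ_z -/
def pz (ψ : ℂ → ℝ) : ℂ → ℂ :=
  fun z => (((dv ψ 1 z : ℝ) : ℂ) - Complex.I * ((dv ψ Complex.I z : ℝ) : ℂ)) / 2
/-- twisted ∂ -/
def del (ψ : ℂ → ℝ) (g : ℂ → ℂ) : ℂ → ℂ := fun z => dzz g z + pz ψ z * g z
end

lemma contDiff_db {f : ℂ → ℂ} (hf : ContDiff ℝ ∞ f) : ContDiff ℝ ∞ (db f) := by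
  apply ContDiff.div_const
  exact (contDiff_dv hf 1).add (contDiff_const.mul (contDiff_dv hf Complex.I))

lemma contDiff_dzz {f : ℂ → ℂ} (hf : ContDiff ℝ ∞ f) : ContDiff ℝ ∞ (dzz f) := by
  apply ContDiff.div_const
  exact (contDiff_dv hf 1).sub (contDiff_const.mul (contDiff_dv hf Complex.I))

lemma contDiff_Ef {ψ : ℂ → ℝ} (hψ : ContDiff ℝ ∞ ψ) : ContDiff ℝ ∞ (Ef ψ) :=
  Complex.ofRealCLM.contDiff.comp (Real.contDiff_exp.comp hψ)

lemma contDiff_pz {ψ : ℂ → ℝ} (hψ : ContDiff ℝ ∞ ψ) : ContDiff ℝ ∞ (pz ψ) := by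
  apply ContDiff.div_const
  exact (Complex.ofRealCLM.contDiff.comp (contDiff_dv hψ 1)).sub
    (contDiff_const.mul (Complex.ofRealCLM.contDiff.comp (contDiff_dv hψ Complex.I)))

lemma contDiff_conjf {f : ℂ → ℂ} (hf : ContDiff ℝ ∞ f) :
    ContDiff ℝ ∞ (fun w => (starRingEnd ℂ) (f w)) :=
  Complex.conjCLE.toContinuousLinearMap.contDiff.comp hf

lemma contDiff_del {ψ : ℂ → ℝ} {g : ℂ → ℂ} (hψ : ContDiff ℝ ∞ ψ) (hg : ContDiff ℝ ∞ g) :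
    ContDiff ℝ ∞ (del ψ g) :=
  (contDiff_dzz hg).add ((contDiff_pz hψ).mul hg)

lemma dv_div_const {f : ℂ → ℂ} (hf : ContDiff ℝ ∞ f) (c v z : ℂ) :
    dv (fun w => f w / c) v z = dv f v z / c := by
  simp only [div_eq_mul_inv, dv]
  rw [fderiv_mul_const (hf.differentiable one_le_inf z)]
  simp [mul_comm]

lemma dv_const_mul {f : ℂ → ℂ} (hf : ContDiff ℝ ∞ f) (c v z : ℂ) :
    dv (fun w => c * f w) v z = c * dv f v z := by
  simp only [dv]
  rw [fderiv_const_mul (hf.differentiable one_le_inf z) c]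
  simp

lemma dv_sub {f g : ℂ → ℂ} (hf : ContDiff ℝ ∞ f) (hg : ContDiff ℝ ∞ g) (v z : ℂ) :
    dv (fun w => f w - g w) v z = dv f v z - dv g v z := by
  simp only [dv]
  rw [fderiv_fun_sub (hf.differentiable one_le_inf z) (hg.differentiable one_le_inf z)]
  rfl

lemma dv_db {g : ℂ → ℂ} (hg : ContDiff ℝ ∞ g) (v z : ℂ) :
    dv (db g) v z = (dv (dv g 1) v z + Complex.I * dv (dv g Complex.I) v z) / 2 := by
  show dv (fun w => (dv g 1 w + Complex.I * dv g Complex.I w) / 2) v z = _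
  rw [dv_div_const ((contDiff_dv hg 1).add (contDiff_const.mul (contDiff_dv hg Complex.I))),
    dv_add (contDiff_dv hg 1) (contDiff_const.mul (contDiff_dv hg Complex.I)),
    dv_const_mul (contDiff_dv hg Complex.I)]

lemma dv_dzz {g : ℂ → ℂ} (hg : ContDiff ℝ ∞ g) (v z : ℂ) :
    dv (dzz g) v z = (dv (dv g 1) v z - Complex.I * dv (dv g Complex.I) v z) / 2 := by
  show dv (fun w => (dv g 1 w - Complex.I * dv g Complex.I w) / 2) v z = _
  rw [dv_div_const ((contDiff_dv hg 1).sub (contDiff_const.mul (contDiff_dv hg Complex.I))),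
    dv_sub (contDiff_dv hg 1) (contDiff_const.mul (contDiff_dv hg Complex.I)),
    dv_const_mul (contDiff_dv hg Complex.I)]

lemma dv_Ef {ψ : ℂ → ℝ} (hψ : ContDiff ℝ ∞ ψ) (v z : ℂ) :
    dv (Ef ψ) v z = ((dv ψ v z : ℝ) : ℂ) * Ef ψ z := dv_exp hψ v z

lemma dv_ofReal_dv {ψ : ℂ → ℝ} (hψ : ContDiff ℝ ∞ ψ) (u v z : ℂ) :
    dv (fun w => ((dv ψ u w : ℝ) : ℂ)) v z = ((dv (dv ψ u) v z : ℝ) : ℂ) :=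
  dv_ofReal (contDiff_dv hψ u) v z

lemma dv_pz {ψ : ℂ → ℝ} (hψ : ContDiff ℝ ∞ ψ) (v z : ℂ) :
    dv (pz ψ) v z
      = (((dv (dv ψ 1) v z : ℝ) : ℂ) - Complex.I * ((dv (dv ψ Complex.I) v z : ℝ) : ℂ)) / 2 := by
  show dv (fun w => (((dv ψ 1 w : ℝ) : ℂ) - Complex.I * ((dv ψ Complex.I w : ℝ) : ℂ)) / 2) v z = _
  have h1 : ContDiff ℝ ∞ (fun w => ((dv ψ 1 w : ℝ) : ℂ)) :=
    Complex.ofRealCLM.contDiff.comp (contDiff_dv hψ 1)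
  have h2 : ContDiff ℝ ∞ (fun w => ((dv ψ Complex.I w : ℝ) : ℂ)) :=
    Complex.ofRealCLM.contDiff.comp (contDiff_dv hψ Complex.I)
  rw [dv_div_const (h1.sub (contDiff_const.mul h2)), dv_sub h1 (contDiff_const.mul h2),
    dv_const_mul h2, dv_ofReal_dv hψ, dv_ofReal_dv hψ]
lemma planarLap_eq (ψ : ℂ → ℝ) (z : ℂ) :
    planarLap ψ z = dv (dv ψ 1) 1 z + dv (dv ψ Complex.I) Complex.I z := rfl

lemma dv_del {ψ : ℂ → ℝ} {g : ℂ → ℂ} (hψ : ContDiff ℝ ∞ ψ) (hg : ContDiff ℝ ∞ g) (v z : ℂ) :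
    dv (del ψ g) v z = dv (dzz g) v z + (dv (pz ψ) v z * g z + pz ψ z * dv g v z) := by
  show dv (fun w => dzz g w + pz ψ w * g w) v z = _
  rw [dv_add (contDiff_dzz hg) ((contDiff_pz hψ).mul hg), dv_mul (contDiff_pz hψ) hg]

lemma pointwise_identity (ψ : ℂ → ℝ) (g : ℂ → ℂ) (hψ : ContDiff ℝ ∞ ψ)
    (hg : ContDiff ℝ ∞ g) (z : ℂ) :
    db g z * (starRingEnd ℂ) (db g z) * Ef ψ z
      = del ψ g z * (starRingEnd ℂ) (del ψ g z) * Ef ψ z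
        + (((planarLap ψ z : ℝ) : ℂ) / 4) * (g z * (starRingEnd ℂ) (g z)) * Ef ψ z
        + (db (fun w => g w * (starRingEnd ℂ) (db g w) * Ef ψ w) z
           - dzz (fun w => g w * (starRingEnd ℂ) (del ψ g w) * Ef ψ w) z) := by
  have hdb := contDiff_db hg
  have hdel := contDiff_del hψ hg
  have hEf := contDiff_Ef hψ
  have hcdb : ContDiff ℝ ∞ (fun w => (starRingEnd ℂ) (db g w)) := contDiff_conjf hdb
  have hcdel : ContDiff ℝ ∞ (fun w => (starRingEnd ℂ) (del ψ g w)) := contDiff_conjf hdel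
  have hQ : ∀ v, dv (fun w => g w * (starRingEnd ℂ) (db g w) * Ef ψ w) v z
      = (dv g v z * (starRingEnd ℂ) (db g z) + g z * (starRingEnd ℂ) (dv (db g) v z)) * Ef ψ z
        + g z * (starRingEnd ℂ) (db g z) * (((dv ψ v z : ℝ) : ℂ) * Ef ψ z) := by
    intro v
    rw [dv_mul (hg.mul hcdb) hEf, dv_mul hg hcdb, dv_conj hdb, dv_Ef hψ]
  have hP : ∀ v, dv (fun w => g w * (starRingEnd ℂ) (del ψ g w) * Ef ψ w) v z
      = (dv g v z * (starRingEnd ℂ) (del ψ g z) + g z * (starRingEnd ℂ) (dv (del ψ g) v z)) * Ef ψ z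
        + g z * (starRingEnd ℂ) (del ψ g z) * (((dv ψ v z : ℝ) : ℂ) * Ef ψ z) := by
    intro v
    rw [dv_mul (hg.mul hcdel) hEf, dv_mul hg hcdel, dv_conj hdel, dv_Ef hψ]
  have expand_db : db (fun w => g w * (starRingEnd ℂ) (db g w) * Ef ψ w) z
      = (dv (fun w => g w * (starRingEnd ℂ) (db g w) * Ef ψ w) 1 z
        + Complex.I * dv (fun w => g w * (starRingEnd ℂ) (db g w) * Ef ψ w) Complex.I z) / 2 := rfl
  have expand_dzz : dzz (fun w => g w * (starRingEnd ℂ) (del ψ g w) * Ef ψ w) z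
      = (dv (fun w => g w * (starRingEnd ℂ) (del ψ g w) * Ef ψ w) 1 z
        - Complex.I * dv (fun w => g w * (starRingEnd ℂ) (del ψ g w) * Ef ψ w) Complex.I z) / 2 := rfl
  rw [expand_db, expand_dzz, hQ, hQ, hP, hP]
  rw [dv_db hg, dv_db hg, dv_del hψ hg, dv_del hψ hg, dv_dzz hg, dv_dzz hg, dv_pz hψ, dv_pz hψ]
  rw [planarLap_eq]
  simp only [db, dzz, del, pz]
  rw [dv_clairaut hg z Complex.I 1, dv_clairaut hψ z Complex.I 1]
  simp only [map_add, map_sub, map_mul, map_div₀, Complex.conj_I, Complex.conj_ofReal,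
    map_ofNat, Complex.ofReal_add]
  ring_nf
  simp only [Complex.I_sq]
  ring
lemma hcs_mono {f F : ℂ → ℂ} (hF : HasCompactSupport F) (h : support f ⊆ tsupport F) :
    HasCompactSupport f :=
  IsCompact.of_isClosed_subset hF (isClosed_tsupport _)
    (closure_minimal h (isClosed_tsupport F))

lemma integral_db_eq_zero (Q : ℂ → ℂ) (hQ : ContDiff ℝ ∞ Q) (hQc : HasCompactSupport Q) :
    ∫ z, db Q z = 0 := by
  have i1 : Integrable (dv Q 1) :=
    ((contDiff_dv hQ 1).continuous).integrable_of_hasCompactSupport (hasCompactSupport_dv hQc 1)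
  have i2 : Integrable (dv Q Complex.I) :=
    ((contDiff_dv hQ Complex.I).continuous).integrable_of_hasCompactSupport
      (hasCompactSupport_dv hQc Complex.I)
  have : ∀ z, db Q z = (dv Q 1 z + Complex.I • dv Q Complex.I z) / 2 := by
    intro z; simp [db, smul_eq_mul]
  have i2' : Integrable (fun z => Complex.I • dv Q Complex.I z) := i2.smul Complex.I
  calc ∫ z, db Q z = ∫ z, (dv Q 1 z + Complex.I • dv Q Complex.I z) / 2 := by
        simp only [this]
    _ = (∫ z, (dv Q 1 z + Complex.I • dv Q Complex.I z)) / 2 := integral_div 2 _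
    _ = ((∫ z, dv Q 1 z) + Complex.I • ∫ z, dv Q Complex.I z) / 2 := by
        rw [integral_add i1 i2', integral_smul]
    _ = 0 := by rw [integral_dv Q hQ hQc 1, integral_dv Q hQ hQc Complex.I]; simp

lemma integral_dzz_eq_zero (Q : ℂ → ℂ) (hQ : ContDiff ℝ ∞ Q) (hQc : HasCompactSupport Q) :
    ∫ z, dzz Q z = 0 := by
  have i1 : Integrable (dv Q 1) :=
    ((contDiff_dv hQ 1).continuous).integrable_of_hasCompactSupport (hasCompactSupport_dv hQc 1)
  have i2 : Integrable (dv Q Complex.I) :=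
    ((contDiff_dv hQ Complex.I).continuous).integrable_of_hasCompactSupport
      (hasCompactSupport_dv hQc Complex.I)
  have : ∀ z, dzz Q z = (dv Q 1 z - Complex.I • dv Q Complex.I z) / 2 := by
    intro z; simp [dzz, smul_eq_mul]
  have i2' : Integrable (fun z => Complex.I • dv Q Complex.I z) := i2.smul Complex.I
  calc ∫ z, dzz Q z = ∫ z, (dv Q 1 z - Complex.I • dv Q Complex.I z) / 2 := by
        simp only [this]
    _ = (∫ z, (dv Q 1 z - Complex.I • dv Q Complex.I z)) / 2 := integral_div 2 _
    _ = ((∫ z, dv Q 1 z) - Complex.I • ∫ z, dv Q Complex.I z) / 2 := by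
        rw [integral_sub i1 i2', integral_smul]
    _ = 0 := by rw [integral_dv Q hQ hQc 1, integral_dv Q hQ hQc Complex.I]; simp

lemma mul_conj_norm (w : ℂ) : w * (starRingEnd ℂ) w = ((‖w‖^2 : ℝ) : ℂ) := by
  rw [Complex.mul_conj]
  norm_cast
  rw [Complex.normSq_eq_norm_sq]

lemma support_db {f : ℂ → ℂ} : support (db f) ⊆ tsupport f := by
  intro z hz
  simp only [db, mem_support] at hz
  by_contra h
  have h1 : dv f 1 z = 0 := by
    by_contra h1; exact h (support_dv f 1 h1)
  have h2 : dv f Complex.I z = 0 := by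
    by_contra h2; exact h (support_dv f Complex.I h2)
  rw [h1, h2] at hz; simp at hz

lemma support_dzz {f : ℂ → ℂ} : support (dzz f) ⊆ tsupport f := by
  intro z hz
  simp only [dzz, mem_support] at hz
  by_contra h
  have h1 : dv f 1 z = 0 := by
    by_contra h1; exact h (support_dv f 1 h1)
  have h2 : dv f Complex.I z = 0 := by
    by_contra h2; exact h (support_dv f Complex.I h2)
  rw [h1, h2] at hz; simp at hz

lemma support_del {ψ : ℂ → ℝ} {f : ℂ → ℂ} : support (del ψ f) ⊆ tsupport f := by
  intro z hz
  simp only [del, mem_support] at hz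
  by_contra h
  have h1 : dzz f z = 0 := by
    by_contra h1; exact h (support_dzz h1)
  have h2 : f z = 0 := image_eq_zero_of_notMem_tsupport h
  rw [h1, h2] at hz; simp at hz

lemma hcs_real {f : ℂ → ℝ} {g : ℂ → ℂ} (hgc : HasCompactSupport g)
    (h : support f ⊆ tsupport g) : HasCompactSupport f :=
  IsCompact.of_isClosed_subset hgc (isClosed_tsupport _)
    (closure_minimal h (isClosed_tsupport g))

lemma key_ineq (ψ : ℂ → ℝ) (hψ : ContDiff ℝ ∞ ψ) (g : ℂ → ℂ) (hg : ContDiff ℝ ∞ g)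
    (hgc : HasCompactSupport g) :
    ∫ z, (planarLap ψ z / 4) * (‖g z‖^2 * Real.exp (ψ z))
      ≤ ∫ z, ‖db g z‖^2 * Real.exp (ψ z) := by
  classical
  set A : ℂ → ℝ := fun z => ‖db g z‖^2 * Real.exp (ψ z) with hAdef
  set B : ℂ → ℝ := fun z => ‖del ψ g z‖^2 * Real.exp (ψ z) with hBdef
  set Cc : ℂ → ℝ := fun z => (planarLap ψ z / 4) * (‖g z‖^2 * Real.exp (ψ z)) with hCdef
  have hdb := contDiff_db hg
  have hdel := contDiff_del hψ hg
  have hEf := contDiff_Ef hψ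
  have hcdb : ContDiff ℝ ∞ (fun w => (starRingEnd ℂ) (db g w)) := contDiff_conjf hdb
  have hcdel : ContDiff ℝ ∞ (fun w => (starRingEnd ℂ) (del ψ g w)) := contDiff_conjf hdel
  have hlapc : Continuous (fun z => planarLap ψ z) := by
    have : (fun z => planarLap ψ z)
        = fun z => dv (dv ψ 1) 1 z + dv (dv ψ Complex.I) Complex.I z := rfl
    rw [this]
    exact ((contDiff_dv (contDiff_dv hψ 1) 1).continuous).add
      ((contDiff_dv (contDiff_dv hψ Complex.I) Complex.I).continuous)
  have hexpc : Continuous (fun z => Real.exp (ψ z)) := Real.continuous_exp.comp hψ.continuous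
  -- integrability of A, B, Cc
  have iA : Integrable A := by
    apply Continuous.integrable_of_hasCompactSupport
    · exact ((hdb.continuous.norm.pow 2)).mul hexpc
    · apply hcs_real hgc
      intro z hz
      have : db g z ≠ 0 := by
        intro h; apply hz; simp [hAdef, h]
      exact support_db (mem_support.mpr this)
  have iB : Integrable B := by
    apply Continuous.integrable_of_hasCompactSupport
    · exact ((hdel.continuous.norm.pow 2)).mul hexpc
    · apply hcs_real hgc
      intro z hz
      have : del ψ g z ≠ 0 := by
        intro h; apply hz; simp [hBdef, h]
      exact support_del (mem_support.mpr this)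
  have iC : Integrable Cc := by
    apply Continuous.integrable_of_hasCompactSupport
    · exact (hlapc.div_const 4).mul ((hg.continuous.norm.pow 2).mul hexpc)
    · apply hcs_real hgc
      intro z hz
      have : g z ≠ 0 := by
        intro h; apply hz; simp [hCdef, h]
      exact subset_tsupport g (mem_support.mpr this)
  -- Q and P
  set Q : ℂ → ℂ := fun w => g w * (starRingEnd ℂ) (db g w) * Ef ψ w with hQdef
  set P : ℂ → ℂ := fun w => g w * (starRingEnd ℂ) (del ψ g w) * Ef ψ w with hPdef
  have hQsm : ContDiff ℝ ∞ Q := (hg.mul hcdb).mul hEf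
  have hPsm : ContDiff ℝ ∞ P := (hg.mul hcdel).mul hEf
  have hQc : HasCompactSupport Q := by
    apply hcs_mono hgc
    intro z hz
    have : g z ≠ 0 := by
      intro h; apply hz; simp [hQdef, h]
    exact subset_tsupport g (mem_support.mpr this)
  have hPc : HasCompactSupport P := by
    apply hcs_mono hgc
    intro z hz
    have : g z ≠ 0 := by
      intro h; apply hz; simp [hPdef, h]
    exact subset_tsupport g (mem_support.mpr this)
  have idbQ : Integrable (db Q) :=
    (contDiff_db hQsm).continuous.integrable_of_hasCompactSupport
      (hcs_mono hQc support_db)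
  have idzzP : Integrable (dzz P) :=
    (contDiff_dzz hPsm).continuous.integrable_of_hasCompactSupport
      (hcs_mono hPc support_dzz)
  -- pointwise identity rearranged
  have hpt : ∀ z, ((A z - B z - Cc z : ℝ) : ℂ) = db Q z - dzz P z := by
    intro z
    have hid := pointwise_identity ψ g hψ hg z
    have e1 : db g z * (starRingEnd ℂ) (db g z) * Ef ψ z = ((A z : ℝ) : ℂ) := by
      rw [mul_conj_norm]
      simp only [hAdef, Ef, Complex.ofReal_mul]
    have e2 : del ψ g z * (starRingEnd ℂ) (del ψ g z) * Ef ψ z = ((B z : ℝ) : ℂ) := by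
      rw [mul_conj_norm]
      simp only [hBdef, Ef, Complex.ofReal_mul]
    have e3 : (((planarLap ψ z : ℝ) : ℂ) / 4) * (g z * (starRingEnd ℂ) (g z)) * Ef ψ z
        = ((Cc z : ℝ) : ℂ) := by
      rw [mul_conj_norm]
      simp only [hCdef, Ef, Complex.ofReal_mul, Complex.ofReal_div]
      push_cast
      ring
    rw [e1, e2, e3] at hid
    push_cast
    rw [hid]
    ring
  -- integrate
  have hint : ((∫ z, (A z - B z - Cc z) : ℝ) : ℂ) = 0 := by
    have h1 : ∫ z, ((A z - B z - Cc z : ℝ) : ℂ) = ((∫ z, (A z - B z - Cc z) : ℝ) : ℂ) :=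
      ContinuousLinearMap.integral_comp_comm Complex.ofRealCLM ((iA.sub iB).sub iC)
    rw [← h1]
    calc ∫ z, ((A z - B z - Cc z : ℝ) : ℂ) = ∫ z, (db Q z - dzz P z) := by
          congr 1; ext z; rw [hpt]
      _ = (∫ z, db Q z) - ∫ z, dzz P z := integral_sub idbQ idzzP
      _ = 0 := by
          rw [integral_db_eq_zero Q hQsm hQc, integral_dzz_eq_zero P hPsm hPc]; simp
  have hreal : (∫ z, A z) - (∫ z, B z) - (∫ z, Cc z) = 0 := by
    have h0 := Complex.ofReal_eq_zero.mp hint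
    have iAB : Integrable (fun z => A z - B z) := iA.sub iB
    rwa [integral_sub iAB iC, integral_sub iA iB] at h0
  have hBnn : 0 ≤ ∫ z, B z := by
    apply integral_nonneg
    intro z
    exact mul_nonneg (sq_nonneg _) (Real.exp_pos _).le
  have hfin : (∫ z, Cc z) ≤ ∫ z, A z := by linarith
  exact hfin
lemma db_conj_eq {g : ℂ → ℂ} (hg : ContDiff ℝ ∞ g) (z : ℂ) :
    db (fun w => (starRingEnd ℂ) (g w)) z = (starRingEnd ℂ) (dzz g z) := by
  simp only [db, dzz, dv_conj hg]
  simp only [map_div₀, map_sub, map_mul, Complex.conj_I, map_ofNat]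
  ring

lemma key_ineq' (ψ : ℂ → ℝ) (hψ : ContDiff ℝ ∞ ψ) (g : ℂ → ℂ) (hg : ContDiff ℝ ∞ g)
    (hgc : HasCompactSupport g) :
    ∫ z, (planarLap ψ z / 4) * (‖g z‖^2 * Real.exp (ψ z))
      ≤ ∫ z, ‖dzz g z‖^2 * Real.exp (ψ z) := by
  have hcg : ContDiff ℝ ∞ (fun w => (starRingEnd ℂ) (g w)) := contDiff_conjf hg
  have hcgc : HasCompactSupport (fun w => (starRingEnd ℂ) (g w)) := by
    apply hcs_mono hgc
    intro z hz
    have : g z ≠ 0 := by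
      intro h; apply hz; simp [h]
    exact subset_tsupport g (mem_support.mpr this)
  have h := key_ineq ψ hψ _ hcg hcgc
  have e1 : ∀ z, ‖db (fun w => (starRingEnd ℂ) (g w)) z‖ = ‖dzz g z‖ := by
    intro z; rw [db_conj_eq hg]; exact RCLike.norm_conj _
  have e2 : ∀ z : ℂ, ‖(starRingEnd ℂ) (g z)‖ = ‖g z‖ := fun z => RCLike.norm_conj _
  calc ∫ z, (planarLap ψ z / 4) * (‖g z‖^2 * Real.exp (ψ z))
      = ∫ z, (planarLap ψ z / 4) * (‖(starRingEnd ℂ) (g z)‖^2 * Real.exp (ψ z)) := by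
        simp only [e2]
    _ ≤ ∫ z, ‖db (fun w => (starRingEnd ℂ) (g w)) z‖^2 * Real.exp (ψ z) := h
    _ = ∫ z, ‖dzz g z‖^2 * Real.exp (ψ z) := by simp only [e1]

lemma db_dzz_eq {f : ℂ → ℂ} (hf : ContDiff ℝ ∞ f) (z : ℂ) :
    db (dzz f) z = planarLap f z / 4 := by
  have h1 : db (dzz f) z = (dv (dzz f) 1 z + Complex.I * dv (dzz f) Complex.I z) / 2 := rfl
  have h2 : planarLap f z = dv (dv f 1) 1 z + dv (dv f Complex.I) Complex.I z := rfl
  rw [h1, h2, dv_dzz hf, dv_dzz hf, dv_clairaut hf z Complex.I 1]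
  have : Complex.I * Complex.I = -1 := Complex.I_mul_I
  field_simp
  ring_nf
  simp only [Complex.I_sq]
  ring

lemma main_global (ψ : ℂ → ℝ) (hψ : ContDiff ℝ ∞ ψ) (t : ℝ) (ht : 0 ≤ t)
    (f : ℂ → ℂ) (hf : ContDiff ℝ ∞ f) (hfc : HasCompactSupport f)
    (hlap : ∀ z ∈ tsupport f, t ≤ planarLap ψ z) :
    t^2 * ∫ z, ‖f z‖^2 * Real.exp (ψ z) ≤ ∫ z, ‖planarLap f z‖^2 * Real.exp (ψ z) := by
  have hexpc : Continuous (fun z => Real.exp (ψ z)) := Real.continuous_exp.comp hψ.continuous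
  have hlapc : Continuous (fun z => planarLap ψ z) := by
    have : (fun z => planarLap ψ z)
        = fun z => dv (dv ψ 1) 1 z + dv (dv ψ Complex.I) Complex.I z := rfl
    rw [this]
    exact ((contDiff_dv (contDiff_dv hψ 1) 1).continuous).add
      ((contDiff_dv (contDiff_dv hψ Complex.I) Complex.I).continuous)
  have hdzzf : ContDiff ℝ ∞ (dzz f) := contDiff_dzz hf
  have hdzzfc : HasCompactSupport (dzz f) := hcs_mono hfc support_dzz
  -- integrability facts
  have iF : Integrable (fun z => ‖f z‖^2 * Real.exp (ψ z)) := by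
    apply Continuous.integrable_of_hasCompactSupport
      (((hf.continuous.norm.pow 2)).mul hexpc)
    apply hcs_real hfc
    intro z hz
    have : f z ≠ 0 := by intro h; apply hz; simp [h]
    exact subset_tsupport f (mem_support.mpr this)
  have iDF : Integrable (fun z => ‖dzz f z‖^2 * Real.exp (ψ z)) := by
    apply Continuous.integrable_of_hasCompactSupport
      (((hdzzf.continuous.norm.pow 2)).mul hexpc)
    apply hcs_real hfc
    intro z hz
    have : dzz f z ≠ 0 := by intro h; apply hz; simp [h]
    exact support_dzz (mem_support.mpr this)
  have iLF : Integrable (fun z => (planarLap ψ z / 4) * (‖f z‖^2 * Real.exp (ψ z))) :=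
    ((hlapc.div_const 4).mul ((hf.continuous.norm.pow 2).mul hexpc)).integrable_of_hasCompactSupport
      (by
        apply hcs_real hfc
        intro z hz
        have : f z ≠ 0 := by intro h; apply hz; simp [h]
        exact subset_tsupport f (mem_support.mpr this))
  have iLDF : Integrable (fun z => (planarLap ψ z / 4) * (‖dzz f z‖^2 * Real.exp (ψ z))) :=
    ((hlapc.div_const 4).mul
      ((hdzzf.continuous.norm.pow 2).mul hexpc)).integrable_of_hasCompactSupport
      (by
        apply hcs_real hfc
        intro z hz
        have : dzz f z ≠ 0 := by intro h; apply hz; simp [h]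
        exact support_dzz (mem_support.mpr this))
  -- step (5): (t/4) ∫ ‖f‖² e ≤ ∫ (Δψ/4) ‖f‖² e
  have step5 : (t/4) * ∫ z, ‖f z‖^2 * Real.exp (ψ z)
      ≤ ∫ z, (planarLap ψ z / 4) * (‖f z‖^2 * Real.exp (ψ z)) := by
    rw [← integral_const_mul]
    apply integral_mono (iF.const_mul _) iLF
    intro z
    by_cases hz : z ∈ tsupport f
    · have := hlap z hz
      have hnn : 0 ≤ ‖f z‖^2 * Real.exp (ψ z) := mul_nonneg (sq_nonneg _) (Real.exp_pos _).le
      apply mul_le_mul_of_nonneg_right _ hnn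
      linarith
    · have : f z = 0 := image_eq_zero_of_notMem_tsupport hz
      simp [this]
  have step3 : (t/4) * ∫ z, ‖dzz f z‖^2 * Real.exp (ψ z)
      ≤ ∫ z, (planarLap ψ z / 4) * (‖dzz f z‖^2 * Real.exp (ψ z)) := by
    rw [← integral_const_mul]
    apply integral_mono (iDF.const_mul _) iLDF
    intro z
    by_cases hz : z ∈ tsupport f
    · have := hlap z hz
      have hnn : 0 ≤ ‖dzz f z‖^2 * Real.exp (ψ z) := mul_nonneg (sq_nonneg _) (Real.exp_pos _).le
      apply mul_le_mul_of_nonneg_right _ hnn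
      linarith
    · have h0 : dzz f z = 0 := by
        by_contra h
        exact hz (support_dzz (mem_support.mpr h))
      simp [h0]
  have step4 := key_ineq' ψ hψ f hf hfc
  have step2 := key_ineq ψ hψ (dzz f) hdzzf hdzzfc
  have step1 : ∫ z, ‖planarLap f z‖^2 * Real.exp (ψ z)
      = 16 * ∫ z, ‖db (dzz f) z‖^2 * Real.exp (ψ z) := by
    rw [← integral_const_mul]
    congr 1; ext z
    rw [db_dzz_eq hf]
    have : ‖planarLap f z / 4‖^2 = ‖planarLap f z‖^2 / 16 := by
      rw [norm_div]
      norm_num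
      ring
    rw [this]
    ring
  have hIf : 0 ≤ ∫ z, ‖f z‖^2 * Real.exp (ψ z) :=
    integral_nonneg (fun z => mul_nonneg (sq_nonneg _) (Real.exp_pos _).le)
  have hIdf : 0 ≤ ∫ z, ‖dzz f z‖^2 * Real.exp (ψ z) :=
    integral_nonneg (fun z => mul_nonneg (sq_nonneg _) (Real.exp_pos _).le)
  -- combine
  calc t^2 * ∫ z, ‖f z‖^2 * Real.exp (ψ z)
      = 16 * ((t/4) * ((t/4) * ∫ z, ‖f z‖^2 * Real.exp (ψ z))) := by ring
    _ ≤ 16 * ((t/4) * ∫ z, (planarLap ψ z / 4) * (‖f z‖^2 * Real.exp (ψ z))) := by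
        apply mul_le_mul_of_nonneg_left _ (by norm_num)
        apply mul_le_mul_of_nonneg_left step5 (by linarith)
    _ ≤ 16 * ((t/4) * ∫ z, ‖dzz f z‖^2 * Real.exp (ψ z)) := by
        apply mul_le_mul_of_nonneg_left _ (by norm_num)
        apply mul_le_mul_of_nonneg_left step4 (by linarith)
    _ ≤ 16 * (∫ z, (planarLap ψ z / 4) * (‖dzz f z‖^2 * Real.exp (ψ z))) := by
        apply mul_le_mul_of_nonneg_left step3 (by norm_num)
    _ ≤ 16 * ∫ z, ‖db (dzz f) z‖^2 * Real.exp (ψ z) := by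
        apply mul_le_mul_of_nonneg_left step2 (by norm_num)
    _ = ∫ z, ‖planarLap f z‖^2 * Real.exp (ψ z) := step1.symm
open scoped Manifold in
lemma _dummy_manifold_open : True := trivial

lemma support_planarLap {E : Type*} [NormedAddCommGroup E] [NormedSpace ℝ E] (f : ℂ → E) :
    support (fun z => planarLap f z) ⊆ tsupport f := by
  intro z hz
  simp only [mem_support] at hz
  have hpl : planarLap f z = dv (dv f 1) 1 z + dv (dv f Complex.I) Complex.I z := rfl
  by_contra h
  apply hz
  rw [hpl]
  have h1 : dv (dv f 1) 1 z = 0 := by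
    by_contra h1
    exact h (closure_minimal (support_dv f 1) (isClosed_tsupport f)
      (support_dv (dv f 1) 1 h1))
  have h2 : dv (dv f Complex.I) Complex.I z = 0 := by
    by_contra h2
    exact h (closure_minimal (support_dv f Complex.I) (isClosed_tsupport f)
      (support_dv (dv f Complex.I) Complex.I h2))
  rw [h1, h2, add_zero]

lemma planarLap_congr_open {f₁ f₂ : ℂ → ℝ} {U : Set ℂ} (hU : IsOpen U)
    (h : ∀ w ∈ U, f₁ w = f₂ w) {z : ℂ} (hz : z ∈ U) :
    planarLap f₁ z = planarLap f₂ z := by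
  have h1 : ∀ w ∈ U, fderiv ℝ f₁ w = fderiv ℝ f₂ w := by
    intro w hw
    exact Filter.EventuallyEq.fderiv_eq (eventually_of_mem (hU.mem_nhds hw) h)
  have e1 : (fun w => fderiv ℝ f₁ w 1) =ᶠ[nhds z] (fun w => fderiv ℝ f₂ w 1) := by
    filter_upwards [hU.mem_nhds hz] with w hw
    rw [h1 w hw]
  have e2 : (fun w => fderiv ℝ f₁ w Complex.I) =ᶠ[nhds z]
      (fun w => fderiv ℝ f₂ w Complex.I) := by
    filter_upwards [hU.mem_nhds hz] with w hw
    rw [h1 w hw]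
  unfold planarLap
  rw [e1.fderiv_eq, e2.fderiv_eq]

/-- Carleman inequality for the planar Laplacian with weight e^{th}, Δh ≥ 1. -/
theorem carleman_laplacian :
    ∃ c > 0, ∀ (D : Set ℂ) (h : ℂ → ℝ), IsOpen D → ContDiffOn ℝ (⊤ : ℕ∞) h D →
      (∀ z ∈ D, 1 ≤ planarLap h z) →
      ∀ t : ℝ, 1 ≤ t → ∀ f : ℂ → ℂ, ContDiff ℝ (⊤ : ℕ∞) f → HasCompactSupport f →
        tsupport f ⊆ D →
        c * t^2 * ∫ z in D, ‖f z‖^2 * Real.exp (t * h z) ≤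
          ∫ z in D, ‖planarLap f z‖^2 * Real.exp (t * h z) := by
  refine ⟨1, one_pos, ?_⟩
  intro D h hD hh hlap t ht f hf' hfc hsupp
  have hf : ContDiff ℝ ∞ f := hf'.of_le (by simp)
  have ht0 : (0:ℝ) ≤ t := le_trans zero_le_one ht
  -- compact set L between tsupport f and D
  obtain ⟨L, hLc, hKL, hLD⟩ := exists_compact_between hfc hD hsupp
  -- cutoff
  obtain ⟨χ, hχ1, hχ0, hχ01⟩ :=
    exists_contMDiffMap_one_nhds_of_subset_interior (modelWithCornersSelf ℝ ℂ) (M := ℂ) (n := (⊤ : ℕ∞))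
      (isClosed_tsupport f) hKL
  have hχsm : ContDiff ℝ ∞ (χ : ℂ → ℝ) := by
    have := χ.contMDiff
    exact contMDiff_iff_contDiff.mp this
  -- open set where χ = 1
  obtain ⟨U, hUopen, hKU, hU1⟩ := eventually_nhdsSet_iff_exists.mp hχ1
  set V : Set ℂ := U ∩ D with hVdef
  have hVopen : IsOpen V := hUopen.inter hD
  have hKV : tsupport f ⊆ V := subset_inter hKU hsupp
  -- the global weight
  set ψ : ℂ → ℝ := fun z => t * (χ z * h z) with hψdef
  have hψsm : ContDiff ℝ ∞ ψ := by
    rw [contDiff_iff_contDiffAt]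
    intro z
    by_cases hz : z ∈ D
    · have hhz : ContDiffAt ℝ ∞ h z := ((hh z hz).contDiffAt (hD.mem_nhds hz)).of_le (by simp)
      exact contDiffAt_const.mul ((hχsm.contDiffAt).mul hhz)
    · have hzL : z ∉ L := fun hzl => hz (hLD hzl)
      have : ψ =ᶠ[nhds z] (fun _ => 0) := by
        filter_upwards [hLc.isClosed.isOpen_compl.mem_nhds hzL] with w hw
        simp [hψdef, hχ0 w hw]
      exact (contDiffAt_const (c := (0:ℝ))).congr_of_eventuallyEq this
  -- Laplacian bound on tsupport f
  have hlapψ : ∀ z ∈ tsupport f, t ≤ planarLap ψ z := by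
    intro z hz
    have hzV : z ∈ V := hKV hz
    have hzD : z ∈ D := hzV.2
    -- ψ = t * h on V
    have e0 : ∀ w ∈ V, ψ w = t * h w := by
      intro w hw
      rw [hψdef]
      simp [hU1 w hw.1]
    have e1 : planarLap ψ z = planarLap (fun w => t * h w) z :=
      planarLap_congr_open hVopen e0 hzV
    -- planarLap (t * h) = t * planarLap h on D
    have hdiff : ∀ w ∈ D, DifferentiableAt ℝ h w := by
      intro w hw
      exact (((hh w hw).contDiffAt (hD.mem_nhds hw)).of_le (by simp)).differentiableAt one_le_inf
    have hD1 : ∀ w ∈ D, fderiv ℝ (fun y => t * h y) w = t • fderiv ℝ h w := by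
      intro w hw
      exact fderiv_const_mul (hdiff w hw) t
    have hfr : ContDiffAt ℝ ∞ (fderiv ℝ h) z := by
      have : ContDiffAt ℝ (∞+1) h z := ((hh z hzD).contDiffAt (hD.mem_nhds hzD)).of_le (by simp)
      exact this.fderiv_right le_rfl
    have hdfr1 : DifferentiableAt ℝ (fun w => fderiv ℝ h w 1) z :=
      ((ContinuousLinearMap.apply ℝ ℝ (1:ℂ)).differentiableAt).comp z
        (hfr.differentiableAt one_le_inf)
    have hdfrI : DifferentiableAt ℝ (fun w => fderiv ℝ h w Complex.I) z :=
      ((ContinuousLinearMap.apply ℝ ℝ (Complex.I)).differentiableAt).comp z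
        (hfr.differentiableAt one_le_inf)
    have e2 : planarLap (fun w => t * h w) z = t * planarLap h z := by
      have ea : (fun w => fderiv ℝ (fun y => t * h y) w 1)
          =ᶠ[nhds z] (fun w => t * fderiv ℝ h w 1) := by
        filter_upwards [hD.mem_nhds hzD] with w hw
        rw [hD1 w hw]; simp
      have eb : (fun w => fderiv ℝ (fun y => t * h y) w Complex.I)
          =ᶠ[nhds z] (fun w => t * fderiv ℝ h w Complex.I) := by
        filter_upwards [hD.mem_nhds hzD] with w hw
        rw [hD1 w hw]; simp
      unfold planarLap
      rw [ea.fderiv_eq, eb.fderiv_eq, fderiv_const_mul hdfr1 t, fderiv_const_mul hdfrI t]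
      simp only [ContinuousLinearMap.smul_apply, smul_eq_mul]
      ring
    rw [e1, e2]
    have := hlap z hzD
    nlinarith
  -- convert set integrals to global integrals with weight ψ
  have hzero1 : ∀ z ∉ D, ‖f z‖^2 * Real.exp (t * h z) = 0 := by
    intro z hz
    have : f z = 0 := image_eq_zero_of_notMem_tsupport (fun hm => hz (hsupp hm))
    simp [this]
  have hzero2 : ∀ z ∉ D, ‖planarLap f z‖^2 * Real.exp (t * h z) = 0 := by
    intro z hz
    have : planarLap f z = 0 := by
      by_contra hc
      exact hz (hsupp (support_planarLap f (mem_support.mpr hc)))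
    simp [this]
  rw [setIntegral_eq_integral_of_forall_compl_eq_zero hzero1,
    setIntegral_eq_integral_of_forall_compl_eq_zero hzero2]
  have hw1 : ∀ z, ‖f z‖^2 * Real.exp (t * h z) = ‖f z‖^2 * Real.exp (ψ z) := by
    intro z
    by_cases hfz : f z = 0
    · simp [hfz]
    · have hzK : z ∈ tsupport f := subset_tsupport f (mem_support.mpr hfz)
      rw [hψdef]
      simp [hU1 z (hKU hzK)]
  have hw2 : ∀ z, ‖planarLap f z‖^2 * Real.exp (t * h z)
      = ‖planarLap f z‖^2 * Real.exp (ψ z) := by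
    intro z
    by_cases hfz : planarLap f z = 0
    · simp [hfz]
    · have hzK : z ∈ tsupport f := support_planarLap f (mem_support.mpr hfz)
      rw [hψdef]
      simp [hU1 z (hKU hzK)]
  simp only [hw1, hw2]
  rw [one_mul]
  exact main_global ψ hψsm t ht0 f hf hfc hlapψ
end

section
/- Let u be a continuous function on the closed unit ball B ⊆ ℝⁿ such that there exist points p, q ∈ B and a radius ρ > 0 with B_ρ(p) ⊆ {u > 0} ∩ B and B_ρ(q) ⊆ {u < 0} ∩ B. Then the zero set Z(u) = {x ∈ B : u(x) = 0} has (n-1)-dimensional Hausdorff measure at least c(n) ρ^{n-1} for a dimensional constant c(n) > 0. -/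
open MeasureTheory Metric Module

theorem exists_mem_segment_eq_zero {E : Type*} [AddCommGroup E] [Module ℝ E]
    [TopologicalSpace E] [IsTopologicalAddGroup E] [ContinuousSMul ℝ E]
    {S : Set E} {u : E → ℝ} (hS : Convex ℝ S) (hu : ContinuousOn u S) {a b : E}
    (ha : a ∈ S) (hb : b ∈ S) (hua : 0 ≤ u a) (hub : u b ≤ 0) :
    ∃ z ∈ segment ℝ a b, u z = 0 :=
  (convex_segment a b).isPreconnected.intermediate_value (right_mem_segment ℝ a b)
    (left_mem_segment ℝ a b) (hu.mono (hS.segment_subset ha hb)) ⟨hub, hua⟩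

theorem LinearMap.apply_eq_of_mem_segment {E F : Type*} [AddCommGroup E] [Module ℝ E]
    [AddCommGroup F] [Module ℝ F] (f : E →ₗ[ℝ] F) {a b z : E} (hab : f a = f b)
    (hz : z ∈ segment ℝ a b) : f z = f a := by
  have : f z ∈ segment ℝ (f a) (f b) :=
    image_segment ℝ f.toAffineMap a b ▸ Set.mem_image_of_mem _ hz
  rwa [← hab, segment_same, Set.mem_singleton_iff] at this

/-- Through every point of `ball p ρ` runs a segment parallel to `q - p` ending in `ball q ρ`;
it meets the zero set of `u`, and it projects to a single point of `(ℝ ∙ (q - p))ᗮ`. -/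
theorem ball_orthogonalProjectionOnto_subset_image_zeroSet {E : Type*} [NormedAddCommGroup E]
    [InnerProductSpace ℝ E] {S : Set E} {u : E → ℝ} (hS : Convex ℝ S) (hu : ContinuousOn u S)
    {p q : E} {ρ : ℝ} (hp : ball p ρ ⊆ {x | 0 < u x} ∩ S) (hq : ball q ρ ⊆ {x | u x < 0} ∩ S) :
    ball ((ℝ ∙ (q - p))ᗮ.orthogonalProjectionOnto p) ρ ⊆
      (ℝ ∙ (q - p))ᗮ.orthogonalProjectionOnto '' {x ∈ S | u x = 0} := by
  set K := (ℝ ∙ (q - p))ᗮ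
  set P := K.orthogonalProjectionOnto
  intro y hy
  set w : K := y - P p
  have hw : ‖(w : E)‖ < ρ := by rwa [mem_ball, dist_eq_norm] at hy
  have hpw : p + w ∈ ball p ρ := by rwa [mem_ball, dist_eq_norm, add_sub_cancel_left]
  have hqw : q + w ∈ ball q ρ := by rwa [mem_ball, dist_eq_norm, add_sub_cancel_left]
  obtain ⟨z, hz, hz0⟩ := exists_mem_segment_eq_zero hS hu (hp hpw).2 (hq hqw).2
    (hp hpw).1.le (hq hqw).1.le
  refine ⟨z, ⟨hS.segment_subset (hp hpw).2 (hq hqw).2 hz, hz0⟩, ?_⟩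
  have hPqp : P q = P p := by
    rw [← sub_eq_zero, ← map_sub]
    exact Submodule.orthogonalProjectionOnto_orthogonalComplement_singleton_eq_zero (q - p)
  have hPz : P z = P (p + w) :=
    (P : E →ₗ[ℝ] K).apply_eq_of_mem_segment (by simp [hPqp]) hz
  rw [hPz, map_add, K.orthogonalProjectionOnto_mem_subspace_eq_self, add_sub_cancel]

theorem hausdorffMeasure_finrank_ball {E : Type*} [NormedAddCommGroup E] [InnerProductSpace ℝ E]
    [FiniteDimensional ℝ E] [MeasurableSpace E] [BorelSpace E] (x : E) {r : ℝ} (hr : 0 < r) :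
    μH[finrank ℝ E] (ball x r) = ENNReal.ofReal (r ^ finrank ℝ E) *
      μH[finrank ℝ E] (ball (0 : EuclideanSpace ℝ (Fin (finrank ℝ E))) 1) := by
  let e := (stdOrthonormalBasis ℝ E).repr.toIsometryEquiv
  rw [Measure.addHaar_ball_of_pos _ x hr, ← e.hausdorffMeasure_image, e.image_ball]
  simp [e]

theorem zero_set_measure_of_sign_balls_general (n : ℕ) :
    ∃ c > 0, ∀ (u : EuclideanSpace ℝ (Fin n) → ℝ)
      (p q : EuclideanSpace ℝ (Fin n)) (ρ : ℝ),
      ContinuousOn u (Metric.closedBall 0 1) →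
      p ∈ Metric.closedBall 0 1 → q ∈ Metric.closedBall 0 1 → 0 < ρ →
      Metric.ball p ρ ⊆ {x | 0 < u x} ∩ Metric.closedBall 0 1 →
      Metric.ball q ρ ⊆ {x | u x < 0} ∩ Metric.closedBall 0 1 →
      ENNReal.ofReal (c * ρ^(n-1)) ≤
        Measure.hausdorffMeasure ((n:ℝ) - 1)
          {x | x ∈ Metric.closedBall (0 : EuclideanSpace ℝ (Fin n)) 1 ∧ u x = 0} := by
  set β := μH[(n - 1 : ℕ)] (ball (0 : EuclideanSpace ℝ (Fin (n - 1))) 1)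
  have hβ : β ≠ ⊤ := measure_ball_lt_top.ne
  refine ⟨β.toReal, ENNReal.toReal_pos (measure_ball_pos _ _ one_pos).ne' hβ,
    fun u p q ρ hu _ _ hρ hp hq => ?_⟩
  have hpq : q - p ≠ 0 := by
    have hup : 0 < u p := (hp (mem_ball_self hρ)).1
    have huq : u q < 0 := (hq (mem_ball_self hρ)).1
    rw [sub_ne_zero]
    rintro rfl
    exact lt_asymm hup huq
  have hn : 0 < n := by
    simpa using finrank_pos_iff_exists_ne_zero (R := ℝ) |>.2 ⟨q - p, hpq⟩
  set K := (ℝ ∙ (q - p))ᗮ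
  have hK : finrank ℝ K = n - 1 := by
    have := K.finrank_add_finrank_orthogonal
    rw [Submodule.orthogonal_orthogonal, finrank_span_singleton hpq, finrank_euclideanSpace_fin]
      at this
    omega
  have hdim : (n : ℝ) - 1 = (finrank ℝ K : ℕ) := by rw [hK]; push_cast [hn]; ring
  rw [hdim]
  calc ENNReal.ofReal (β.toReal * ρ ^ (n - 1))
      = μH[finrank ℝ K] (ball (K.orthogonalProjectionOnto p) ρ) := by
        rw [hausdorffMeasure_finrank_ball _ hρ, hK, ENNReal.ofReal_mul ENNReal.toReal_nonneg,
          ENNReal.ofReal_toReal hβ, mul_comm]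
    _ ≤ μH[finrank ℝ K] (K.orthogonalProjectionOnto '' {x ∈ closedBall 0 1 | u x = 0}) :=
        measure_mono (ball_orthogonalProjectionOnto_subset_image_zeroSet (convex_closedBall 0 1)
          hu hp hq)
    _ ≤ _ := hausdorffMeasure_orthogonalProjectionOnto_le K _ _ (Nat.cast_nonneg _)

/-- If u is continuous on the closed unit ball and there are balls of radius ρ
    inside the positivity and negativity sets, then the zero set has
    (n-1)-dimensional Hausdorff measure at least c(n)ρ^{n-1}. -/
theorem zero_set_measure_of_sign_balls (n : ℕ) (hn : 1 ≤ n) :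
    ∃ c > 0, ∀ (u : EuclideanSpace ℝ (Fin n) → ℝ)
      (p q : EuclideanSpace ℝ (Fin n)) (ρ : ℝ),
      ContinuousOn u (Metric.closedBall 0 1) →
      p ∈ Metric.closedBall 0 1 → q ∈ Metric.closedBall 0 1 → 0 < ρ →
      Metric.ball p ρ ⊆ {x | 0 < u x} ∩ Metric.closedBall 0 1 →
      Metric.ball q ρ ⊆ {x | u x < 0} ∩ Metric.closedBall 0 1 →
      ENNReal.ofReal (c * ρ^(n-1)) ≤
        Measure.hausdorffMeasure ((n:ℝ) - 1)
          {x | x ∈ Metric.closedBall (0 : EuclideanSpace ℝ (Fin n)) 1 ∧ u x = 0} :=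
  zero_set_measure_of_sign_balls_general n
end

section
/- Jensen's formula bound: let f be holomorphic on a neighborhood of the closed disc {|z| ≤ R} with f(0) ≠ 0, and let n(r) denote the number of zeros of f (with multiplicity) in {|z| ≤ r} for 0 < r < R. Then n(r) · log(R/r) ≤ log( sup_{|z| ≤ R} |f| / |f(0)| ). -/
/-!
Jensen's formula bounds the zeros of `f` in `closedBall 0 r`, counted with multiplicity, by
`log (M / ‖f 0‖) / log (R / r)` whenever `‖f‖ ≤ M` on the circle of radius `R`
(`AnalyticOnNhd.sum_divisor_le`). Mathlib states this for `1 ≤ M`; dividing `f` by `‖f 0‖`, which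
leaves the divisor unchanged, reduces the general case `‖f 0‖ ≤ M` to it. Since `f 0 ≠ 0`, no zero
has infinite order, so each distinct zero contributes at least one to the divisor.
-/

open Metric Set

section Divisor

variable {𝕜 E : Type*} [NontriviallyNormedField 𝕜] [NormedAddCommGroup E] [NormedSpace 𝕜 E]
  {U : Set 𝕜} {f : 𝕜 → E}

theorem MeromorphicOn.divisor_const_smul (hf : MeromorphicOn f U) {a : 𝕜} (ha : a ≠ 0) :
    divisor (a • f) U = divisor f U := by
  classical
  ext z
  by_cases hz : z ∈ U
  · have hconst : meromorphicOrderAt (fun _ : 𝕜 ↦ a) z = 0 := by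
      simp [meromorphicOrderAt_const, ha]
    have hsmul := meromorphicOrderAt_smul (f := fun _ : 𝕜 ↦ a) (.const a z) (hf z hz)
    rw [hconst, zero_add] at hsmul
    rw [divisor_apply (hf.const_smul a) hz, divisor_apply hf hz]
    exact congrArg WithTop.untop₀ hsmul
  · simp [hz]

theorem AnalyticOnNhd.ncard_zeros_le_finsum_divisor (hf : AnalyticOnNhd 𝕜 f U)
    (hU : IsCompact U) (h_ne_top : ∀ u ∈ U, analyticOrderAt f u ≠ ⊤) :
    ((f ⁻¹' {0} ∩ U).ncard : ℤ) ≤ ∑ᶠ u, MeromorphicOn.divisor f U u := by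
  set D := MeromorphicOn.divisor f U
  have one_le : ∀ u ∈ f ⁻¹' {0} ∩ U, 1 ≤ D u := by
    rintro u ⟨hzero, hu⟩
    obtain ⟨n, hn⟩ := ENat.ne_top_iff_exists.mp (h_ne_top u hu)
    have hn0 : n ≠ 0 := by
      rintro rfl
      exact (hf u hu).analyticOrderAt_eq_zero.mp hn.symm hzero
    rw [MeromorphicOn.AnalyticOnNhd.divisor_apply hf hu, ← hn]
    simpa using Nat.one_le_iff_ne_zero.mpr hn0
  have mem_support : ∀ u ∈ f ⁻¹' {0} ∩ U, u ∈ D.support :=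
    fun u hu ↦ (one_pos.trans_le (one_le u hu)).ne'
  have hsupp : D.support.Finite := D.finiteSupport hU
  have hzeros : (f ⁻¹' {0} ∩ U).Finite := hsupp.subset mem_support
  rw [finsum_eq_sum_of_support_subset D (s := hsupp.toFinset) (by simp),
    ncard_eq_toFinset_card _ hzeros, Finset.card_eq_sum_ones, Nat.cast_sum]
  calc ∑ u ∈ hzeros.toFinset, ((1 : ℕ) : ℤ)
      ≤ ∑ u ∈ hzeros.toFinset, D u :=
        Finset.sum_le_sum fun u hu ↦ by simpa using one_le u (by simpa using hu)
    _ ≤ ∑ u ∈ hsupp.toFinset, D u :=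
        Finset.sum_le_sum_of_subset_of_nonneg
          (fun u hu ↦ by simpa using mem_support u (by simpa using hu))
          fun u _ _ ↦ MeromorphicOn.AnalyticOnNhd.divisor_nonneg hf u

end Divisor

theorem AnalyticOnNhd.finsum_divisor_mul_log_le {c : ℂ} {r R M : ℝ} {f : ℂ → ℂ} (hr : 0 < r)
    (hrR : r < R) (hf : AnalyticOnNhd ℂ f (closedBall c R)) (hfc : f c ≠ 0) (hM : ‖f c‖ ≤ M)
    (f_bound : ∀ z ∈ sphere c R, ‖f z‖ ≤ M) :
    ((∑ᶠ u, MeromorphicOn.divisor f (closedBall c r) u : ℤ) : ℝ) * Real.log (R / r) ≤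
      Real.log (M / ‖f c‖) := by
  have hfc_pos : 0 < ‖f c‖ := norm_pos_iff.mpr hfc
  have hR : 0 < R := hr.trans hrR
  set a : ℂ := (‖f c‖ : ℂ)⁻¹
  have ha : a ≠ 0 := inv_ne_zero (by exact_mod_cast hfc_pos.ne')
  have norm_smul_apply (z : ℂ) : ‖(a • f) z‖ = ‖f z‖ / ‖f c‖ := by
    simp [a, div_eq_inv_mul]
  have hdiv : MeromorphicOn.divisor (a • f) (closedBall c r) =
      MeromorphicOn.divisor f (closedBall c r) :=
    MeromorphicOn.divisor_const_smul
      (hf.mono (closedBall_subset_closedBall hrR.le)).meromorphicOn ha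
  have jensen := AnalyticOnNhd.sum_divisor_le (c := c) (r := r) (R := R) (M := M / ‖f c‖)
    (f := a • f) (by rwa [abs_of_pos hr]) (by rwa [abs_of_pos hr, abs_of_pos hR])
    ((one_le_div hfc_pos).mpr hM) (by rw [abs_of_pos hR]; exact hf.const_smul (c := a))
    (smul_ne_zero ha hfc)
    (fun z hz ↦ by
      rw [norm_smul_apply]
      exact div_le_div_of_nonneg_right (f_bound z (by rwa [abs_of_pos hR] at hz)) hfc_pos.le)
  rwa [abs_of_pos hr, hdiv, norm_smul_apply, div_self hfc_pos.ne', div_one,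
    le_div_iff₀ (Real.log_pos ((one_lt_div hr).mpr hrR))] at jensen

/-- Jensen's formula zero-counting bound: n(r)·log(R/r) ≤ log(sup_{|z|≤R}|f| / |f(0)|). -/
theorem jensen_zero_count (f : ℂ → ℂ) (U : Set ℂ) (hU : IsOpen U) (R r : ℝ)
    (hsub : Metric.closedBall 0 R ⊆ U) (hf : DifferentiableOn ℂ f U)
    (h0 : f 0 ≠ 0) (hr : 0 < r) (hrR : r < R) :
    (((f ⁻¹' {0}) ∩ Metric.closedBall 0 r).ncard : ℝ) * Real.log (R / r) ≤
      Real.log (sSup ((fun z => ‖f z‖) '' Metric.closedBall 0 R) /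
        ‖f 0‖) := by
  have hA : AnalyticOnNhd ℂ f (closedBall 0 R) := (hf.analyticOnNhd hU).mono hsub
  have hAr : AnalyticOnNhd ℂ f (closedBall 0 r) :=
    hA.mono (closedBall_subset_closedBall hrR.le)
  have hM : ∀ z ∈ closedBall (0 : ℂ) R, ‖f z‖ ≤ sSup ((fun z => ‖f z‖) '' closedBall 0 R) :=
    fun z hz ↦ le_csSup ((isCompact_closedBall 0 R).bddAbove_image hA.continuousOn.norm)
      (mem_image_of_mem _ hz)
  have h_ne_top (u : ℂ) (hu : u ∈ closedBall 0 r) : analyticOrderAt f u ≠ ⊤ := by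
    have hord0 : analyticOrderAt f 0 = 0 :=
      (hAr 0 (mem_closedBall_self hr.le)).analyticOrderAt_eq_zero.mpr h0
    exact hAr.analyticOrderAt_ne_top_of_isPreconnected (convex_closedBall 0 r).isPreconnected
      (mem_closedBall_self hr.le) hu (by simp [hord0])
  have hcount := hAr.ncard_zeros_le_finsum_divisor (isCompact_closedBall 0 r) h_ne_top
  calc (((f ⁻¹' {0}) ∩ closedBall 0 r).ncard : ℝ) * Real.log (R / r)
      ≤ ((∑ᶠ u, MeromorphicOn.divisor f (closedBall 0 r) u : ℤ) : ℝ) * Real.log (R / r) := by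
        gcongr
        · exact Real.log_nonneg ((one_le_div hr).mpr hrR.le)
        · exact_mod_cast hcount
    _ ≤ _ := hA.finsum_divisor_mul_log_le hr hrR h0
        (hM 0 (mem_closedBall_self (hr.trans hrR).le))
        fun z hz ↦ hM z (sphere_subset_closedBall hz)
end
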